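/- Let (x_n) be a sequence of positive reals satisfying the Little Pi recurrence. Then the 4×4 Casorati determinant det[[x_{n+2ki+lj}]]_{0≤i,j≤3} (rows indexed by j = 0,1,2,3 shifts by l, columns by i = 0,1,2,3 shifts by 2k) is identically zero, i.e., det of the matrix with (r,c) entry x_{n+2k(c-1)+l(r-1)} vanishes for all n. -/

import Mathlib

/-!
Write `δ n` for the 3 × 3 Casorati determinant of `x` with column step `2k` and row step `l`.
By the recurrence every 2 × 2 Casorati minor is `x (n + k) + x (n + k + l)`, so Dodgson
condensation expresses `δ n` through these sums, and one more use of the recurrence gives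
`δ n = J (n + 2k) / (x (n + 2k + l) * x (n + 3k + l))` with `J` as in `littlePiNumerator`.
The quotient `J j / (x (j + l) * x (j + k + l))` is `k`-periodic, hence so is `δ`.
Condensing the 4 × 4 determinant `D` gives
`D * (x (n + 3k + l) + x (n + 3k + 2l)) = δ n * δ (n + 2k + l) - δ (n + 2k) * δ (n + l)`,
whose right-hand side vanishes by periodicity, while the factor on the left is positive.
-/

open Matrix

theorem Matrix.desnanot_jacobi_fin_three {R : Type*} [CommRing R] (A : Matrix (Fin 3) (Fin 3) R) :
    A.det * (A.submatrix (Fin.succ ∘ Fin.castSucc) (Fin.succ ∘ Fin.castSucc)).det =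
      (A.submatrix Fin.castSucc Fin.castSucc).det * (A.submatrix Fin.succ Fin.succ).det -
        (A.submatrix Fin.castSucc Fin.succ).det * (A.submatrix Fin.succ Fin.castSucc).det := by
  rw [det_succ_row_zero]
  simp [Fin.sum_univ_succ, det_fin_two, Fin.succAbove]
  ring

theorem Matrix.desnanot_jacobi_fin_four {R : Type*} [CommRing R] (A : Matrix (Fin 4) (Fin 4) R) :
    A.det * (A.submatrix (Fin.succ ∘ Fin.castSucc) (Fin.succ ∘ Fin.castSucc)).det =
      (A.submatrix Fin.castSucc Fin.castSucc).det * (A.submatrix Fin.succ Fin.succ).det -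
        (A.submatrix Fin.castSucc Fin.succ).det * (A.submatrix Fin.succ Fin.castSucc).det := by
  rw [det_succ_row_zero]
  simp [Fin.sum_univ_succ, det_fin_three, det_fin_two, Fin.succAbove]
  ring

def casorati {α : Type*} (x : ℤ → α) (a b n : ℤ) (m : ℕ) : Matrix (Fin m) (Fin m) α :=
  Matrix.of fun r c => x (n + a * c + b * r)

theorem casorati_submatrix {α : Type*} (x : ℤ → α) (a b n : ℤ) {m p : ℕ} (f g : Fin m → Fin p)
    (s t : ℕ) (hf : ∀ i, (f i : ℕ) = i + s) (hg : ∀ j, (g j : ℕ) = j + t) :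
    (casorati x a b n p).submatrix f g = casorati x a b (n + a * t + b * s) m := by
  ext i j
  simp only [casorati, submatrix_apply, of_apply, hf, hg]
  push_cast
  ring_nf

theorem det_casorati_one {R : Type*} [CommRing R] (x : ℤ → R) (a b n : ℤ) :
    (casorati x a b n 1).det = x n := by
  simp [casorati]

theorem det_casorati_condensation {R : Type*} [CommRing R] {m : ℕ}
    (hDJ : ∀ A : Matrix (Fin (m + 2)) (Fin (m + 2)) R,
      A.det * (A.submatrix (Fin.succ ∘ Fin.castSucc) (Fin.succ ∘ Fin.castSucc)).det =
        (A.submatrix Fin.castSucc Fin.castSucc).det * (A.submatrix Fin.succ Fin.succ).det -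
          (A.submatrix Fin.castSucc Fin.succ).det * (A.submatrix Fin.succ Fin.castSucc).det)
    (x : ℤ → R) (a b n : ℤ) :
    (casorati x a b n (m + 2)).det * (casorati x a b (n + a + b) m).det =
      (casorati x a b n (m + 1)).det * (casorati x a b (n + a + b) (m + 1)).det -
        (casorati x a b (n + a) (m + 1)).det * (casorati x a b (n + b) (m + 1)).det := by
  have h := hDJ (casorati x a b n (m + 2))
  rw [casorati_submatrix x a b n (Fin.succ ∘ Fin.castSucc) _ 1 1 (fun _ => rfl) (fun _ => rfl),
    casorati_submatrix x a b n Fin.castSucc Fin.castSucc 0 0 (fun _ => rfl) (fun _ => rfl),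
    casorati_submatrix x a b n Fin.succ Fin.succ 1 1 (fun _ => rfl) (fun _ => rfl),
    casorati_submatrix x a b n Fin.castSucc Fin.succ 0 1 (fun _ => rfl) (fun _ => rfl),
    casorati_submatrix x a b n Fin.succ Fin.castSucc 1 0 (fun _ => rfl) (fun _ => rfl)] at h
  simpa using h

def littlePiNumerator (x : ℤ → ℝ) (k l j : ℤ) : ℝ :=
  (x j + x (j + l)) * (x (j + k + l) + x (j + k + 2*l)) +
    (x (j + l) + x (j + 2*l)) * (x (j + k) + x (j + k + l))

section LittlePi

variable {k l : ℤ} {x : ℤ → ℝ}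
  (hrec : ∀ n : ℤ, x n * x (n + 2*k + l) = x (n + 2*k) * x (n + l) + x (n + k) + x (n + k + l))

include hrec

theorem det_casorati_two (n : ℤ) : (casorati x (2*k) l n 2).det = x (n + k) + x (n + k + l) := by
  rw [det_fin_two]
  simp [casorati]
  linear_combination hrec n

variable (hx : ∀ n, 0 < x n)

include hx

theorem det_casorati_three (n : ℤ) :
    (casorati x (2*k) l n 3).det =
      littlePiNumerator x k l (n + 2*k) / (x (n + 2*k + l) * x (n + 3*k + l)) := by
  have h := det_casorati_condensation desnanot_jacobi_fin_three x (2*k) l n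
  simp only [det_casorati_two hrec, det_casorati_one] at h
  rw [eq_div_iff (mul_pos (hx _) (hx _)).ne', littlePiNumerator]
  linear_combination (norm := ring_nf) x (n + 3*k + l) * h
    + (x (n + 3*k + l) + x (n + 3*k + 2*l)) * hrec (n + k)
    + (x (n + 3*k + l) + x (n + 3*k)) * hrec (n + k + l)

theorem littlePiNumerator_div_periodic :
    Function.Periodic (fun j => littlePiNumerator x k l j / (x (j + l) * x (j + k + l))) k := by
  intro j
  rw [div_eq_div_iff (mul_pos (hx _) (hx _)).ne' (mul_pos (hx _) (hx _)).ne', littlePiNumerator,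
    littlePiNumerator]
  linear_combination (norm := ring_nf) x (j + k + l) *
    ((x (j + k) + x (j + k + l)) * hrec (j + l) - (x (j + k + l) + x (j + k + 2*l)) * hrec j)

theorem det_casorati_three_add_period (n : ℤ) :
    (casorati x (2*k) l (n + k) 3).det = (casorati x (2*k) l n 3).det := by
  rw [det_casorati_three hrec hx, det_casorati_three hrec hx]
  convert littlePiNumerator_div_periodic hrec hx (n + 2*k) using 3 <;> ring_nf

end LittlePi

theorem littlepi_4x4_vanishes_general (k l : ℤ)
    (x : ℤ → ℝ) (hx : ∀ n, 0 < x n)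
    (hrec : ∀ n : ℤ, x n * x (n + 2*k + l) = x (n + 2*k) * x (n + l) + x (n + k) + x (n + k + l)) :
    ∀ n : ℤ,
      Matrix.det (Matrix.of fun r c : Fin 4 => x (n + 2*k*(c : ℤ) + l*(r : ℤ))) = 0 := by
  intro n
  have hper (m : ℤ) : (casorati x (2*k) l (m + 2*k) 3).det = (casorati x (2*k) l m 3).det := by
    rw [show m + 2*k = m + k + k by ring, det_casorati_three_add_period hrec hx,
      det_casorati_three_add_period hrec hx]
  have h := det_casorati_condensation desnanot_jacobi_fin_four x (2*k) l n
  simp only [Nat.reduceAdd] at h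
  rw [det_casorati_two hrec, add_right_comm n, hper, hper, sub_self] at h
  have hcenter : 0 < x (n + l + 2*k + k) + x (n + l + 2*k + k + l) := add_pos (hx _) (hx _)
  exact (mul_eq_zero.mp h).resolve_right hcenter.ne'

theorem littlepi_4x4_vanishes (k l : ℤ) (hk : 0 < k) (hl : 0 < l)
    (x : ℤ → ℝ) (hx : ∀ n, 0 < x n)
    (hrec : ∀ n : ℤ, x n * x (n + 2*k + l) = x (n + 2*k) * x (n + l) + x (n + k) + x (n + k + l)) :
    ∀ n : ℤ,
      Matrix.det (Matrix.of fun r c : Fin 4 => x (n + 2*k*(c : ℤ) + l*(r : ℤ))) = 0 :=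
  littlepi_4x4_vanishes_general k l x hx hrec
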